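/- arXiv:2309.12887 — 3 statements merged into one kernel-verified Lean document; each statement's English description precedes it below -/
import Mathlib

section
/- Let |ψ⟩ be a unit vector in H^{⊗k} ⊗ K whose i-th marginal ρᵢ on H satisfies ⟨ψ₁^{(i)}|ρᵢ|ψ₁^{(i)}⟩ ≥ (1−εᵢ)² for unit vectors |ψ₁^{(i)}⟩ ∈ H, i = 1,…,k. Then there exist a unit vector |ψ'⟩ ∈ K such that ‖|ψ⟩⟨ψ| − |ψ₁^{(1)}⟩⟨ψ₁^{(1)}| ⊗ ⋯ ⊗ |ψ₁^{(k)}⟩⟨ψ₁^{(k)}| ⊗ |ψ'⟩⟨ψ'|‖₂ ≤ 2√(k·ε̄), where ε̄ = (1/k)Σᵢεᵢ. -/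
/-!
Let `Pᵢ` be the orthogonal projection onto `χᵢ` in the `i`-th slot of `H^{⊗k} ⊗ K`; then
`⟨ψ|Pᵢ|ψ⟩ = ⟨χᵢ|ρᵢ|χᵢ⟩ ≥ (1 - εᵢ)² ≥ 1 - 2εᵢ`. The `Pᵢ` commute, and commuting projections satisfy
`1 - P₁⋯P_k ≤ Σᵢ (1 - Pᵢ)`, since `(1 - p) + (1 - q) - (1 - pq) = (1 - p)(1 - q) ≥ 0`.
The product `P₁⋯P_k` is the projection onto `χ₁ ⊗ ⋯ ⊗ χ_k ⊗ K`, sending `ψ` to `χ₁ ⊗ ⋯ ⊗ χ_k ⊗ c`,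
so `‖c‖² ≥ 1 - 2 Σᵢ εᵢ`. For `ψ' = c / ‖c‖` the overlap `|⟨χ₁ ⊗ ⋯ ⊗ χ_k ⊗ ψ'|ψ⟩|²` is `‖c‖²`, and
for unit vectors `‖|u⟩⟨u| - |v⟩⟨v|‖₂² = 2 - 2 |⟨u|v⟩|²`.
-/

open Matrix BigOperators

/-- The outer product `|ψ⟩⟨ψ|`. -/
noncomputable def outer {ι : Type*} [Fintype ι] (ψ : ι → ℂ) : Matrix ι ι ℂ :=
  Matrix.vecMulVec ψ (star ψ)

/-- The Frobenius (Hilbert–Schmidt) norm `‖A‖₂ = √(Tr(A†A))`. -/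
noncomputable def frobNorm {ι : Type*} [Fintype ι] (A : Matrix ι ι ℂ) : ℝ :=
  Real.sqrt ((Aᴴ * A).trace.re)

/-- The marginal (partial trace) of an operator on `H^{⊗k} ⊗ K` onto the `i`-th copy of `H`,
where `H = ℂ^d` and `K = ℂ^m`. -/
noncomputable def marginalM {k d m : ℕ}
    (ρ : Matrix ((Fin k → Fin d) × Fin m) ((Fin k → Fin d) × Fin m) ℂ) (i : Fin k) :
    Matrix (Fin d) (Fin d) ℂ :=
  Matrix.of fun a b => ∑ f : Fin k → Fin d, ∑ y : Fin m,
    if f i = a then ρ (f, y) (Function.update f i b, y) else 0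

/-- The product vector `|χ₁⟩ ⊗ ⋯ ⊗ |χ_k⟩ ⊗ |ψ'⟩` in `H^{⊗k} ⊗ K`. -/
noncomputable def prodVec {k d m : ℕ} (χ : Fin k → Fin d → ℂ) (ψ' : Fin m → ℂ) :
    ((Fin k → Fin d) × Fin m) → ℂ :=
  fun fy => (∏ i, χ i (fy.1 i)) * ψ' fy.2

open scoped Kronecker MatrixOrder ComplexOrder

namespace IsStarProjection

variable {R ι : Type*}

theorem noncommProd [Semiring R] [StarRing R] {s : Finset ι} {p : ι → R} (comm)
    (hp : ∀ i ∈ s, IsStarProjection (p i)) : IsStarProjection (s.noncommProd p comm) := by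
  classical
  induction s using Finset.induction_on with
  | empty => simp
  | insert i s hi ih =>
    rw [Finset.noncommProd_insert_of_notMem _ _ _ _ hi]
    refine (hp i (s.mem_insert_self i)).mul (ih _ fun j hj => hp j (Finset.mem_insert_of_mem hj)) ?_
    exact Finset.noncommProd_commute _ _ _ _ fun j hj =>
      comm (s.mem_insert_self i) (Finset.mem_insert_of_mem hj) (ne_of_mem_of_not_mem hj hi).symm

variable [Ring R] [PartialOrder R] [StarRing R] [StarOrderedRing R]

theorem one_sub_mul_le {p q : R} (hp : IsStarProjection p) (hq : IsStarProjection q)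
    (hpq : Commute p q) : 1 - p * q ≤ (1 - p) + (1 - q) := by
  have hcomm : Commute (1 - p) (1 - q) :=
    (Commute.one_left _).sub_left ((Commute.one_right p).sub_right hpq)
  rw [← sub_nonneg]
  convert (hp.one_sub.mul hq.one_sub hcomm).nonneg using 1
  noncomm_ring

theorem one_sub_noncommProd_le_sum {s : Finset ι} {p : ι → R} (comm)
    (hp : ∀ i ∈ s, IsStarProjection (p i)) :
    1 - s.noncommProd p comm ≤ ∑ i ∈ s, (1 - p i) := by
  classical
  induction s using Finset.induction_on with
  | empty => simp
  | insert i s hi ih =>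
    have hs : ∀ j ∈ s, IsStarProjection (p j) := fun j hj => hp j (Finset.mem_insert_of_mem hj)
    rw [Finset.noncommProd_insert_of_notMem _ _ _ _ hi, Finset.sum_insert hi]
    refine ((hp i (s.mem_insert_self i)).one_sub_mul_le (noncommProd _ hs) ?_).trans
      (add_le_add le_rfl (ih _ hs))
    exact Finset.noncommProd_commute _ _ _ _ fun j hj =>
      comm (s.mem_insert_self i) (Finset.mem_insert_of_mem hj) (ne_of_mem_of_not_mem hj hi).symm

end IsStarProjection

namespace Matrix

variable {ι κ μ R : Type*} [Fintype ι]

def piKronecker [CommMonoid R] (A : ι → Matrix κ κ R) : Matrix (ι → κ) (ι → κ) R :=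
  of fun f g => ∏ i, A i (f i) (g i)

section CommSemiring

variable [CommSemiring R]

theorem piKronecker_mul [DecidableEq ι] [Fintype κ] (A B : ι → Matrix κ κ R) :
    piKronecker (A * B) = piKronecker A * piKronecker B := by
  ext f g
  simp only [piKronecker, of_apply, Pi.mul_apply, mul_apply, Fintype.prod_sum,
    Finset.prod_mul_distrib]

theorem piKronecker_one [DecidableEq κ] : piKronecker (1 : ι → Matrix κ κ R) = 1 := by
  ext f g
  simp [piKronecker, one_apply, Finset.prod_boole, funext_iff]

theorem piKronecker_mulSingle_apply [DecidableEq ι] [DecidableEq κ] (i : ι) (X : Matrix κ κ R)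
    (f g : ι → κ) :
    piKronecker (Pi.mulSingle i X) f g = if ∀ j ≠ i, f j = g j then X (f i) (g i) else 0 := by
  rw [piKronecker, of_apply, Fintype.prod_eq_mul_prod_compl i, Pi.mulSingle_eq_same]
  rw [Finset.prod_congr rfl fun j hj => by
    rw [Pi.mulSingle_eq_of_ne (by simpa using hj), one_apply]]
  simp [Finset.prod_boole]

theorem piKronecker_vecMulVec (u v : ι → κ → R) :
    piKronecker (fun i => vecMulVec (u i) (v i)) =
      vecMulVec (fun f => ∏ i, u i (f i)) (fun g => ∏ i, v i (g i)) := by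
  ext f g
  simp [piKronecker, vecMulVec_apply, Finset.prod_mul_distrib]

theorem conjTranspose_piKronecker [StarRing R] (A : ι → Matrix κ κ R) :
    (piKronecker A)ᴴ = piKronecker (star A) := by
  ext f g
  simp [piKronecker, conjTranspose_apply, star_prod]

end CommSemiring

variable (μ) [DecidableEq ι] [Fintype κ] [DecidableEq κ] [Fintype μ] [DecidableEq μ]
  [CommSemiring R] [StarRing R]

def piKroneckerOneHom : (ι → Matrix κ κ R) →⋆* Matrix ((ι → κ) × μ) ((ι → κ) × μ) R where
  toFun A := piKronecker A ⊗ₖ 1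
  map_one' := by rw [piKronecker_one, one_kronecker_one]
  map_mul' A B := by rw [piKronecker_mul, ← mul_kronecker_mul, one_mul]
  map_star' A := by
    rw [star_eq_conjTranspose, conjTranspose_kronecker, conjTranspose_one, conjTranspose_piKronecker]

theorem piKroneckerOneHom_apply (A : ι → Matrix κ κ R) :
    piKroneckerOneHom μ A = piKronecker A ⊗ₖ 1 := rfl

end Matrix

theorem IsStarProjection.mulSingle {ι : Type*} {R : ι → Type*} [DecidableEq ι]
    [∀ i, Monoid (R i)] [∀ i, StarMul (R i)] {i : ι} {q : R i} (hq : IsStarProjection q) :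
    IsStarProjection (Pi.mulSingle i q) :=
  ⟨by rw [IsIdempotentElem, ← Pi.mulSingle_mul, hq.isIdempotentElem.eq],
    by rw [IsSelfAdjoint, Pi.star_mulSingle, hq.isSelfAdjoint.star_eq]⟩

namespace Matrix

variable {n : Type*} [Fintype n]

theorem trace_vecMulVec_mul {R : Type*} [CommSemiring R] (u w : n → R) (M : Matrix n n R) :
    trace (vecMulVec u w * M) = w ⬝ᵥ (M *ᵥ u) := by
  rw [vecMulVec_mul, trace_vecMulVec, dotProduct_comm, dotProduct_mulVec]

theorem dotProduct_mulVec_mono {𝕜 : Type*} [RCLike 𝕜] {A B : Matrix n n 𝕜} (h : A ≤ B)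
    (v : n → 𝕜) : star v ⬝ᵥ (A *ᵥ v) ≤ star v ⬝ᵥ (B *ᵥ v) := by
  have := (le_iff.1 h).dotProduct_mulVec_nonneg v
  rwa [sub_mulVec, dotProduct_sub, sub_nonneg] at this

end Matrix

section PureStates

variable {n : Type*} [Fintype n]

theorem outer_mul_outer (u v : n → ℂ) :
    outer u * outer v = (star u ⬝ᵥ v) • vecMulVec u (star v) := by
  rw [outer, outer, vecMulVec_mul_vecMulVec, vecMulVec_smul]

theorem isStarProjection_outer {v : n → ℂ} (hv : star v ⬝ᵥ v = 1) : IsStarProjection (outer v) :=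
  ⟨by rw [IsIdempotentElem, outer_mul_outer, hv, one_smul, outer],
    by rw [IsSelfAdjoint, outer, star_eq_conjTranspose, conjTranspose_vecMulVec, star_star]⟩

theorem frobNorm_outer_sub_outer {u v : n → ℂ} (hu : star u ⬝ᵥ u = 1) (hv : star v ⬝ᵥ v = 1) :
    frobNorm (outer u - outer v) = √(2 - 2 * Complex.normSq (star v ⬝ᵥ u)) := by
  have hself : (outer u - outer v)ᴴ = outer u - outer v :=
    (isStarProjection_outer hu).isSelfAdjoint.sub (isStarProjection_outer hv).isSelfAdjoint
  have hconj : star u ⬝ᵥ v = star (star v ⬝ᵥ u) := star_dotProduct u v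
  rw [frobNorm, hself, sub_mul, mul_sub, mul_sub]
  simp only [outer_mul_outer, trace_sub, trace_smul, trace_vecMulVec]
  rw [dotProduct_comm u, hu, dotProduct_comm u, dotProduct_comm v (star u), hconj,
    dotProduct_comm v, hv]
  congr 1
  simp only [smul_eq_mul, RCLike.star_def, ← Complex.normSq_eq_conj_mul_self,
    Complex.mul_conj, mul_one, Complex.sub_re, Complex.one_re, Complex.ofReal_re]
  ring

theorem exists_unit_le_normSq_dotProduct [Nonempty n] (c : n → ℂ) :
    ∃ u : n → ℂ, star u ⬝ᵥ u = 1 ∧ (star c ⬝ᵥ c).re ≤ Complex.normSq (star u ⬝ᵥ c) := by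
  classical
  obtain ⟨i₀⟩ := ‹Nonempty n›
  by_cases hc : c = 0
  · exact ⟨Pi.single i₀ 1, by simp, by simp [hc]⟩
  set s := (star c ⬝ᵥ c).re
  have hs : star c ⬝ᵥ c = s :=
    Complex.eq_re_of_ofReal_le (r := 0) (by simp)
  have hs0 : 0 < s := by
    have := dotProduct_star_self_pos_iff.2 hc
    rw [hs] at this
    exact_mod_cast this
  have hr : (√s : ℂ) ≠ 0 := by exact_mod_cast (Real.sqrt_pos.2 hs0).ne'
  have hsq : (√s : ℂ) * √s = s := by exact_mod_cast Real.mul_self_sqrt hs0.le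
  refine ⟨(√s : ℂ)⁻¹ • c, ?_, ?_⟩
  · rw [star_smul, smul_dotProduct, dotProduct_smul, hs]
    simp only [smul_eq_mul, star_inv₀, Complex.star_def, Complex.conj_ofReal]
    rw [← hsq]
    field_simp
  · rw [star_smul, smul_dotProduct, hs]
    simp only [smul_eq_mul, star_inv₀, Complex.star_def, Complex.conj_ofReal]
    rw [← hsq, inv_mul_cancel_left₀ hr, Complex.normSq_ofReal, Real.mul_self_sqrt hs0.le]

end PureStates

theorem Fintype.sum_filter_forall_ne_eq_sum_update {ι κ M : Type*} [Fintype ι] [DecidableEq ι]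
    [Fintype κ] [AddCommMonoid M] (f : ι → κ) (i : ι) (G : (ι → κ) → M)
    [DecidablePred fun g : ι → κ => ∀ j, j ≠ i → g j = f j] :
    ∑ g ∈ Finset.univ.filter (fun g : ι → κ => ∀ j, j ≠ i → g j = f j), G g =
      ∑ b, G (Function.update f i b) := by
  have hupd : ∀ g : ι → κ, (∀ j, j ≠ i → g j = f j) → Function.update f i (g i) = g :=
    fun g hg => by
      ext j
      rcases eq_or_ne j i with rfl | hj
      · simp
      · rw [Function.update_of_ne hj, hg j hj]
  apply Finset.sum_nbij' (fun g => g i) (Function.update f i)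
  · simp
  · simpa using fun b j hj => Function.update_of_ne hj _ _
  · intro g hg
    exact hupd g (by simpa using hg)
  · simp
  · intro g hg
    rw [hupd g (by simpa using hg)]

section Slots

variable {k d m : ℕ}

theorem trace_marginalM_mul (ρ : Matrix ((Fin k → Fin d) × Fin m) ((Fin k → Fin d) × Fin m) ℂ)
    (i : Fin k) (X : Matrix (Fin d) (Fin d) ℂ) :
    trace (marginalM ρ i * X) = trace (ρ * piKroneckerOneHom (Fin m) (Pi.mulSingle i X)) := by
  simp only [trace, diag, mul_apply, marginalM, of_apply, piKroneckerOneHom_apply,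
    kroneckerMap_apply, piKronecker_mulSingle_apply, one_apply, Fintype.sum_prod_type,
    mul_ite, mul_one, mul_zero, Finset.sum_ite_eq', Finset.mem_univ, if_true]
  conv_rhs => simp only [← Finset.sum_filter, Fintype.sum_filter_forall_ne_eq_sum_update,
    Function.update_self]
  simp only [Finset.sum_mul, ite_mul, zero_mul]
  conv_lhs =>
    rw [Finset.sum_comm]
    enter [2, b]
    rw [Finset.sum_comm]
    enter [2, f]
    rw [Finset.sum_comm]
    simp only [Finset.sum_ite_eq, Finset.mem_univ, if_true]
  rw [Finset.sum_comm]
  exact Finset.sum_congr rfl fun f _ => Finset.sum_comm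

noncomputable def partialInner (χ : Fin k → Fin d → ℂ) (ψ : (Fin k → Fin d) × Fin m → ℂ) :
    Fin m → ℂ :=
  fun y => ∑ f, star (∏ i, χ i (f i)) * ψ (f, y)

theorem star_prodVec_dotProduct (χ : Fin k → Fin d → ℂ) (u : Fin m → ℂ)
    (ψ : (Fin k → Fin d) × Fin m → ℂ) :
    star (prodVec χ u) ⬝ᵥ ψ = star u ⬝ᵥ partialInner χ ψ := by
  simp only [dotProduct, prodVec, partialInner, Pi.star_apply, star_mul', Fintype.sum_prod_type,
    Finset.mul_sum]
  rw [Finset.sum_comm]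
  exact Finset.sum_congr rfl fun y _ => Finset.sum_congr rfl fun f _ => by ring

theorem partialInner_prodVec {χ : Fin k → Fin d → ℂ} (hχ : ∀ i, star (χ i) ⬝ᵥ χ i = 1)
    (u : Fin m → ℂ) : partialInner χ (prodVec χ u) = u := by
  have hnorm : ∑ f : Fin k → Fin d, star (∏ i, χ i (f i)) * ∏ i, χ i (f i) = 1 := by
    simp only [star_prod, ← Finset.prod_mul_distrib]
    rw [← Fintype.prod_sum fun i b => star (χ i b) * χ i b]
    exact Finset.prod_eq_one fun i _ => hχ i
  ext y
  simp only [partialInner, prodVec, ← mul_assoc, ← Finset.sum_mul, hnorm, one_mul]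

theorem piKroneckerOneHom_outer_mulVec (χ : Fin k → Fin d → ℂ)
    (ψ : (Fin k → Fin d) × Fin m → ℂ) :
    piKroneckerOneHom (Fin m) (fun i => outer (χ i)) *ᵥ ψ = prodVec χ (partialInner χ ψ) := by
  ext ⟨f, y⟩
  simp only [piKroneckerOneHom_apply, outer, piKronecker_vecMulVec, mulVec, dotProduct,
    kroneckerMap_apply, vecMulVec_apply, one_apply, Fintype.sum_prod_type, mul_ite, mul_one,
    mul_zero, ite_mul, zero_mul, Finset.sum_ite_eq, Finset.mem_univ, if_true, prodVec,
    partialInner, Finset.mul_sum, Pi.star_apply, star_prod]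
  exact Finset.sum_congr rfl fun g _ => by ring

theorem re_dotProduct_sub_partialInner_le_sum_marginalM {χ : Fin k → Fin d → ℂ}
    (hχ : ∀ i, star (χ i) ⬝ᵥ χ i = 1) (ψ : (Fin k → Fin d) × Fin m → ℂ) :
    (star ψ ⬝ᵥ ψ).re - (star (partialInner χ ψ) ⬝ᵥ partialInner χ ψ).re ≤
      ∑ i, ((star ψ ⬝ᵥ ψ).re - (star (χ i) ⬝ᵥ (marginalM (outer ψ) i *ᵥ χ i)).re) := by
  set E := piKroneckerOneHom (Fin m) (ι := Fin k) (κ := Fin d) (R := ℂ)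
  set P : Fin k → Matrix _ _ ℂ := fun i => E (Pi.mulSingle i (outer (χ i)))
  have comm : ((Finset.univ : Finset (Fin k)) : Set (Fin k)).Pairwise
      fun i j => Commute (P i) (P j) :=
    fun i _ j _ hij => (Pi.mulSingle_commute hij _ _).map E
  have hP : ∀ i ∈ Finset.univ, IsStarProjection (P i) :=
    fun i _ => (isStarProjection_outer (hχ i)).mulSingle.map E
  have hprod : Finset.univ.noncommProd P comm = E (fun i => outer (χ i)) := by
    rw [← Finset.noncommProd_mulSingle (fun i => outer (χ i))]
    exact (Finset.map_noncommProd _ _ _ E).symm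
  have hmarg : ∀ i, star (χ i) ⬝ᵥ (marginalM (outer ψ) i *ᵥ χ i) = star ψ ⬝ᵥ (P i *ᵥ ψ) := by
    intro i
    rw [← trace_vecMulVec_mul, trace_mul_comm, ← outer, trace_marginalM_mul, outer,
      trace_vecMulVec_mul]
  have hproj : (star ψ ⬝ᵥ (E (fun i => outer (χ i)) *ᵥ ψ)).re =
      (star (partialInner χ ψ) ⬝ᵥ partialInner χ ψ).re := by
    rw [piKroneckerOneHom_outer_mulVec, star_dotProduct, star_prodVec_dotProduct,
      RCLike.star_def, Complex.conj_re]
  have key := dotProduct_mulVec_mono (IsStarProjection.one_sub_noncommProd_le_sum comm hP) ψ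
  simp only [hprod, sub_mulVec, sum_mulVec, one_mulVec, dotProduct_sub, dotProduct_sum] at key
  simpa only [Complex.sub_re, Complex.re_sum, hmarg, hproj] using (Complex.le_def.1 key).1

end Slots

theorem close_to_product_general {k d m : ℕ}
    (ψ : ((Fin k → Fin d) × Fin m) → ℂ) (hψ : star ψ ⬝ᵥ ψ = 1)
    (χ : Fin k → Fin d → ℂ) (hχ : ∀ i, star (χ i) ⬝ᵥ χ i = 1)
    (ε : Fin k → ℝ)
    (h : ∀ i, (1 - ε i) ^ 2 ≤ (star (χ i) ⬝ᵥ (marginalM (outer ψ) i *ᵥ χ i)).re) :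
    ∃ ψ' : Fin m → ℂ, star ψ' ⬝ᵥ ψ' = 1 ∧
      frobNorm (outer ψ - outer (prodVec χ ψ')) ≤
        2 * Real.sqrt (k * ((∑ i, ε i) / k)) := by
  have : Nonempty (Fin m) := by
    by_contra hm
    rw [not_nonempty_iff] at hm
    simp [dotProduct] at hψ
  set c := partialInner χ ψ
  have hc : 1 - (star c ⬝ᵥ c).re ≤ 2 * ∑ i, ε i := by
    have hsum := re_dotProduct_sub_partialInner_le_sum_marginalM hχ ψ
    rw [hψ, Complex.one_re] at hsum
    rw [Finset.mul_sum]
    exact hsum.trans (Finset.sum_le_sum fun i _ => by nlinarith [h i, sq_nonneg (ε i)])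
  obtain ⟨ψ', hψ', hcψ'⟩ := exists_unit_le_normSq_dotProduct c
  have hunit : star (prodVec χ ψ') ⬝ᵥ prodVec χ ψ' = 1 := by
    rw [star_prodVec_dotProduct, partialInner_prodVec hχ, hψ']
  have hmean : (k : ℝ) * ((∑ i, ε i) / k) = ∑ i, ε i := by
    rcases eq_or_ne k 0 with rfl | hk
    · simp
    · field_simp
  refine ⟨ψ', hψ', ?_⟩
  rw [frobNorm_outer_sub_outer hψ hunit, star_prodVec_dotProduct, hmean]
  calc √(2 - 2 * Complex.normSq (star ψ' ⬝ᵥ c)) ≤ √(2 ^ 2 * ∑ i, ε i) :=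
        Real.sqrt_le_sqrt (by linarith)
    _ = 2 * √(∑ i, ε i) := by rw [Real.sqrt_mul (by positivity), Real.sqrt_sq zero_le_two]

/-- If the `i`-th marginal `ρᵢ` of a pure state `|ψ⟩ ∈ H^{⊗k} ⊗ K` satisfies
`⟨ψ₁⁽ⁱ⁾|ρᵢ|ψ₁⁽ⁱ⁾⟩ ≥ (1−εᵢ)²` for unit vectors `|ψ₁⁽ⁱ⁾⟩`, then there is a unit `|ψ'⟩ ∈ K` with
`‖|ψ⟩⟨ψ| − |ψ₁⁽¹⁾⟩⟨ψ₁⁽¹⁾| ⊗ ⋯ ⊗ |ψ₁⁽ᵏ⁾⟩⟨ψ₁⁽ᵏ⁾| ⊗ |ψ'⟩⟨ψ'|‖₂ ≤ 2√(k ε̄)` where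
`ε̄ = (1/k) Σᵢ εᵢ`. -/
theorem close_to_product {k d m : ℕ} (hk : 0 < k)
    (ψ : ((Fin k → Fin d) × Fin m) → ℂ) (hψ : star ψ ⬝ᵥ ψ = 1)
    (χ : Fin k → Fin d → ℂ) (hχ : ∀ i, star (χ i) ⬝ᵥ χ i = 1)
    (ε : Fin k → ℝ) (hε : ∀ i, ε i ∈ Set.Icc (0 : ℝ) 1)
    (h : ∀ i, (1 - ε i) ^ 2 ≤ (star (χ i) ⬝ᵥ (marginalM (outer ψ) i *ᵥ χ i)).re) :
    ∃ ψ' : Fin m → ℂ, star ψ' ⬝ᵥ ψ' = 1 ∧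
      frobNorm (outer ψ - outer (prodVec χ ψ')) ≤
        2 * Real.sqrt (k * ((∑ i, ε i) / k)) :=
  close_to_product_general ψ hψ χ hχ ε h
end

section
/- Define Ψ : L(H ⊗ Q) → L(Q_⊥) by Ψ(ρ) = ⟨0|(Φ⊗Tr)(ρ)|0⟩·μ_Q + ⟨1|(Φ⊗Tr)(ρ)|1⟩·|⊥⟩⟨⊥| where Φ : L(H) → L(Q) is a channel, μ_Q the maximally mixed state on the qubit Q, and |⊥⟩ orthogonal to Q. Then for any density operator ρ on H and any states σ, σ' on Q: Tr(Ψ(ρ⊗σ)Ψ(ρ⊗σ')) = (1/2)(1 − ⟨1|Φ(ρ)|1⟩)² + ⟨1|Φ(ρ)|1⟩². In particular, if ⟨1|Φ(ρ)|1⟩ ≥ 3/4 then this overlap is ≥ 19/32, and if ⟨1|Φ(ρ)|1⟩ ≤ 2/3 then it is ≤ 1/2. -/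
open Matrix BigOperators ComplexOrder Kronecker

/-- A density operator: positive semidefinite with trace 1. -/
def IsDensity {ι : Type*} [Fintype ι] (ρ : Matrix ι ι ℂ) : Prop :=
  ρ.PosSemidef ∧ ρ.trace = 1

/-- A quantum channel (completely positive trace-preserving map), presented via a
Kraus decomposition. -/
def IsCPTP {ι κ : Type*} [Fintype ι] [DecidableEq ι] [Fintype κ]
    (Φ : Matrix ι ι ℂ → Matrix κ κ ℂ) : Prop :=
  ∃ (r : ℕ) (K : Fin r → Matrix κ ι ℂ),
    (∀ ρ, Φ ρ = ∑ i, K i * ρ * (K i)ᴴ) ∧ (∑ i, (K i)ᴴ * K i = 1)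

/-- The partial trace over the qubit factor of an operator on `H ⊗ Q`. -/
noncomputable def trQ {n : ℕ} (ρ : Matrix (Fin n × Fin 2) (Fin n × Fin 2) ℂ) :
    Matrix (Fin n) (Fin n) ℂ :=
  Matrix.of fun a b => ∑ y : Fin 2, ρ (a, y) (b, y)

/-- The channel `Ψ(ρ) = ⟨0|(Φ⊗Tr)(ρ)|0⟩·μ_Q + ⟨1|(Φ⊗Tr)(ρ)|1⟩·|⊥⟩⟨⊥|` on `L(H ⊗ Q)` with
values in `L(Q_⊥)`, where `Q_⊥ = ℂ³` has basis `|0⟩, |1⟩, |⊥⟩` and `μ_Q = I/2` on the span of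
`|0⟩, |1⟩`. -/
noncomputable def PsiCh {n : ℕ} (Φ : Matrix (Fin n) (Fin n) ℂ → Matrix (Fin 2) (Fin 2) ℂ)
    (ρ : Matrix (Fin n × Fin 2) (Fin n × Fin 2) ℂ) : Matrix (Fin 3) (Fin 3) ℂ :=
  Matrix.diagonal ![Φ (trQ ρ) 0 0 / 2, Φ (trQ ρ) 0 0 / 2, Φ (trQ ρ) 1 1]

/-! Tracing out the qubit of `ρ ⊗ σ` returns `ρ`, so both factors of the overlap are the diagonal
matrix `diag((1 - p)/2, (1 - p)/2, p)` with `p = ⟨1|Φ(ρ)|1⟩`; `p` is real and nonnegative and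
`⟨0|Φ(ρ)|0⟩ = 1 - p` because `Φ(ρ)` is again a density matrix. The overlap is the quadratic
`(1 - p)²/2 + p² = 3p²/2 - p + 1/2`, which equals `19/32` at `p = 3/4` and `1/2` at `p = 0` and
`p = 2/3`. -/

lemma trQ_kronecker {n : ℕ} (ρ : Matrix (Fin n) (Fin n) ℂ) {σ : Matrix (Fin 2) (Fin 2) ℂ}
    (hσ : σ.trace = 1) : trQ (ρ ⊗ₖ σ) = ρ := by
  ext a b
  simpa [trQ, ← Finset.mul_sum, trace_fin_two] using congrArg (ρ a b * ·) hσ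

lemma IsCPTP.isDensity_apply {ι κ : Type*} [Fintype ι] [DecidableEq ι] [Fintype κ]
    {Φ : Matrix ι ι ℂ → Matrix κ κ ℂ} (hΦ : IsCPTP Φ) {ρ : Matrix ι ι ℂ} (hρ : IsDensity ρ) :
    IsDensity (Φ ρ) := by
  obtain ⟨r, K, hK, hK1⟩ := hΦ
  refine ⟨hK ρ ▸ posSemidef_sum _ fun i _ => hρ.1.mul_mul_conjTranspose_same (K i), ?_⟩
  calc (Φ ρ).trace = ∑ i, ((K i)ᴴ * K i * ρ).trace := by
        simp only [hK, trace_sum, trace_mul_cycle (K _)]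
    _ = 1 := by rw [← trace_sum, ← Finset.sum_mul, hK1, Matrix.one_mul, hρ.2]

lemma IsDensity.qubit_diag {M : Matrix (Fin 2) (Fin 2) ℂ} (hM : IsDensity M) :
    0 ≤ (M 1 1).re ∧ M 1 1 = (M 1 1).re ∧ M 0 0 = 1 - (M 1 1).re := by
  have h11 : 0 ≤ M 1 1 := hM.1.diag_nonneg
  have h1 : M 1 1 = (M 1 1).re := Complex.eq_re_of_ofReal_le (by rwa [Complex.ofReal_zero])
  refine ⟨(Complex.nonneg_iff.1 h11).1, h1, ?_⟩
  linear_combination (trace_fin_two M).symm.trans hM.2 - h1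

lemma PsiCh_kronecker_mul_trace {n : ℕ}
    {Φ : Matrix (Fin n) (Fin n) ℂ → Matrix (Fin 2) (Fin 2) ℂ} (hΦ : IsCPTP Φ)
    {ρ : Matrix (Fin n) (Fin n) ℂ} (hρ : IsDensity ρ) {σ σ' : Matrix (Fin 2) (Fin 2) ℂ}
    (hσ : σ.trace = 1) (hσ' : σ'.trace = 1) :
    (PsiCh Φ (ρ ⊗ₖ σ) * PsiCh Φ (ρ ⊗ₖ σ')).trace
      = ((1 / 2 * (1 - (Φ ρ 1 1).re) ^ 2 + (Φ ρ 1 1).re ^ 2 : ℝ) : ℂ) := by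
  obtain ⟨-, h1, h0⟩ := (hΦ.isDensity_apply hρ).qubit_diag
  rw [PsiCh, PsiCh, trQ_kronecker ρ hσ, trQ_kronecker ρ hσ', diagonal_mul_diagonal,
    trace_diagonal, Fin.sum_univ_three]
  simp only [cons_val_zero, cons_val_one, cons_val_two, head_cons, tail_cons]
  generalize (Φ ρ 1 1).re = p at h0 h1 ⊢
  rw [h0, h1]
  push_cast
  ring

/-- For any density `ρ` on `H` and qubit states `σ, σ'`:
`Tr(Ψ(ρ⊗σ)Ψ(ρ⊗σ')) = (1/2)(1 − ⟨1|Φ(ρ)|1⟩)² + ⟨1|Φ(ρ)|1⟩²`; in particular the overlap is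
`≥ 19/32` when `⟨1|Φ(ρ)|1⟩ ≥ 3/4`, and `≤ 1/2` when `⟨1|Φ(ρ)|1⟩ ≤ 2/3`. -/
theorem PsiCh_overlap {n : ℕ}
    (Φ : Matrix (Fin n) (Fin n) ℂ → Matrix (Fin 2) (Fin 2) ℂ) (hΦ : IsCPTP Φ)
    (ρ : Matrix (Fin n) (Fin n) ℂ) (σ σ' : Matrix (Fin 2) (Fin 2) ℂ)
    (hρ : IsDensity ρ) (hσ : IsDensity σ) (hσ' : IsDensity σ') :
    ((PsiCh Φ (ρ ⊗ₖ σ) * PsiCh Φ (ρ ⊗ₖ σ')).trace).re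
        = (1 / 2) * (1 - (Φ ρ 1 1).re) ^ 2 + ((Φ ρ 1 1).re) ^ 2
    ∧ ((3 / 4 : ℝ) ≤ (Φ ρ 1 1).re →
        (19 / 32 : ℝ) ≤ ((PsiCh Φ (ρ ⊗ₖ σ) * PsiCh Φ (ρ ⊗ₖ σ')).trace).re)
    ∧ ((Φ ρ 1 1).re ≤ 2 / 3 →
        ((PsiCh Φ (ρ ⊗ₖ σ) * PsiCh Φ (ρ ⊗ₖ σ')).trace).re ≤ 1 / 2) := by
  rw [PsiCh_kronecker_mul_trace hΦ hρ hσ.2 hσ'.2, Complex.ofReal_re]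
  obtain ⟨hp, -, -⟩ := (hΦ.isDensity_apply hρ).qubit_diag
  exact ⟨rfl, fun h => by nlinarith, fun h => by nlinarith⟩
end

section
/- Let |ψ₁⟩,…,|ψ_k⟩ be unit vectors in a finite-dimensional Hilbert space H and let Ψ be the dim H × k matrix with these columns. Then there exists a matrix Ψ' with orthonormal columns such that ‖Ψ − Ψ'‖₂² ≤ Σ_{i≠j} |⟨ψᵢ|ψⱼ⟩|², where ‖·‖₂ is the Frobenius norm. -/
/-!
Take a thin singular value decomposition `Ψ = U Σ Vᴴ` (`U` with orthonormal columns, `V` unitary,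
`Σ = diag σ` with `σ ≥ 0`) and put `Ψ' = U Vᴴ`. The Frobenius norm is invariant under such
`U` and `V`, so `‖Ψ - Ψ'‖₂² = ∑ (σᵢ - 1)²` while `‖ΨᴴΨ - 1‖₂² = ∑ (σᵢ² - 1)²`, and
`(σ - 1)² ≤ (σ² - 1)²` for `σ ≥ 0`. As the `ψᵢ` are unit vectors, `ΨᴴΨ - 1` is the Gram matrix
with its diagonal removed, whose squared Frobenius norm is `∑_{i ≠ j} |⟨ψᵢ|ψⱼ⟩|²`.
-/

open Matrix BigOperators

open Module in
theorem exists_orthonormalBasis_eq_norm_smul {𝕜 E ι : Type*} [RCLike 𝕜] [NormedAddCommGroup E]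
    [InnerProductSpace 𝕜 E] [FiniteDimensional 𝕜 E] [Fintype ι]
    (card_ι : finrank 𝕜 E = Fintype.card ι) {f : ι → E}
    (hf : Pairwise fun i j => inner 𝕜 (f i) (f j) = 0) :
    ∃ b : OrthonormalBasis ι 𝕜 E, ∀ i, f i = (‖f i‖ : 𝕜) • b i := by
  set v : ι → E := fun i => (‖f i‖⁻¹ : 𝕜) • f i
  have hv : Orthonormal 𝕜 ({i | f i ≠ 0}.domRestrict v) := by
    refine ⟨fun i => norm_smul_inv_norm i.prop, fun i j hij => ?_⟩
    simp [v, inner_smul_left, inner_smul_right, hf (Subtype.coe_ne_coe.mpr hij)]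
  obtain ⟨b, hb⟩ := hv.exists_orthonormalBasis_extension_of_card_eq card_ι
  refine ⟨b, fun i => ?_⟩
  by_cases hi : f i = 0
  · simp [hi]
  · rw [hb i hi, smul_smul, ← RCLike.ofReal_inv, ← RCLike.ofReal_mul,
      mul_inv_cancel₀ (norm_ne_zero_iff.mpr hi), RCLike.ofReal_one, one_smul]

theorem sq_sub_one_le_sq_sq_sub_one {s : ℝ} (hs : 0 ≤ s) : (s - 1) ^ 2 ≤ (s ^ 2 - 1) ^ 2 := by
  nlinarith [mul_nonneg (mul_nonneg hs (sq_nonneg (s - 1))) (by positivity : 0 ≤ s + 2)]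

theorem Matrix.diagonal_ofReal_sub_one {𝕜 n : Type*} [RCLike 𝕜] [DecidableEq n] (x : n → ℝ) :
    diagonal (fun j => ((x j - 1 : ℝ) : 𝕜)) = diagonal (fun j => (x j : 𝕜)) - 1 := by
  rw [← diagonal_one, diagonal_sub]
  simp

namespace Matrix

variable {𝕜 m n p q : Type*} [RCLike 𝕜] [Fintype m] [Fintype n] [Fintype p] [Fintype q]

theorem re_trace_conjTranspose_mul_self (M : Matrix m n 𝕜) :
    RCLike.re (Mᴴ * M).trace = ∑ i, ∑ j, ‖M i j‖ ^ 2 := by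
  simp only [trace, diag, mul_apply, conjTranspose_apply, RCLike.star_def, RCLike.conj_mul,
    map_sum, ← RCLike.ofReal_pow, RCLike.ofReal_re]
  exact Finset.sum_comm

theorem trace_conjTranspose_mul_self_isometry_mul_mul_conjTranspose [DecidableEq n]
    [DecidableEq p] {U : Matrix m n 𝕜} {V : Matrix q p 𝕜} (hU : Uᴴ * U = 1) (hV : Vᴴ * V = 1)
    (M : Matrix n p 𝕜) :
    ((U * M * Vᴴ)ᴴ * (U * M * Vᴴ)).trace = (Mᴴ * M).trace := by
  have : (U * M * Vᴴ)ᴴ * (U * M * Vᴴ) = V * (Mᴴ * (Uᴴ * U) * M) * Vᴴ := by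
    simp only [conjTranspose_mul, conjTranspose_conjTranspose, Matrix.mul_assoc]
  rw [this, hU, Matrix.mul_one, trace_mul_cycle, hV, Matrix.one_mul]

theorem re_trace_conjTranspose_mul_self_diagonal [DecidableEq n] (d : n → ℝ) :
    RCLike.re ((diagonal fun i => (d i : 𝕜))ᴴ * diagonal fun i => (d i : 𝕜)).trace
      = ∑ i, d i ^ 2 := by
  simp [sq]

theorem exists_isometry_mul_diagonal_of_conjTranspose_mul_self_eq_diagonal [DecidableEq n]
    (hcard : Fintype.card n ≤ Fintype.card m) {W : Matrix m n 𝕜} {d : n → ℝ}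
    (hW : Wᴴ * W = diagonal fun j => (d j : 𝕜)) :
    ∃ U : Matrix m n 𝕜, Uᴴ * U = 1 ∧ W = U * diagonal fun j => (√(d j) : 𝕜) := by
  classical
  obtain ⟨e⟩ := Function.Embedding.nonempty_of_card_le hcard
  set w : n → EuclideanSpace 𝕜 m := fun j => WithLp.toLp 2 (Wᵀ j)
  have hw : ∀ i j, inner 𝕜 (w i) (w j) = (Wᴴ * W) i j := inner_matrix_col_col W W
  -- Extending the columns by zero along `e` gives an orthogonal family indexed like a basis.
  set f : m → EuclideanSpace 𝕜 m := Function.extend e w 0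
  have hfe : ∀ j, f (e j) = w j := e.injective.extend_apply w 0
  have hf : Pairwise fun a b => inner 𝕜 (f a) (f b) = 0 := by
    intro a b hab
    by_cases ha : ∃ i, e i = a
    · by_cases hb : ∃ j, e j = b
      · obtain ⟨i, rfl⟩ := ha
        obtain ⟨j, rfl⟩ := hb
        rw [hfe, hfe, hw, hW, diagonal_apply_ne _ (e.injective.ne_iff.mp hab)]
      · simp [f, Function.extend_apply' _ _ _ hb]
    · simp [f, Function.extend_apply' _ _ _ ha]
  obtain ⟨b, hb⟩ := exists_orthonormalBasis_eq_norm_smul finrank_euclideanSpace hf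
  have hnorm : ∀ j, ‖w j‖ = √(d j) := fun j => by
    rw [norm_eq_sqrt_re_inner (𝕜 := 𝕜), hw, hW, diagonal_apply_eq, RCLike.ofReal_re]
  refine ⟨of fun a j => b (e j) a, ?_, ?_⟩
  · ext i j
    rw [← inner_matrix_col_col]
    exact (orthonormal_iff_ite.mp b.orthonormal (e i) (e j)).trans (by simp [one_apply])
  · ext a j
    have := congr(WithLp.ofLp $(hb (e j)) a)
    simpa [hfe, hnorm, w, RCLike.real_smul_eq_coe_mul, mul_comm] using this

theorem exists_thin_svd [DecidableEq n] (hcard : Fintype.card n ≤ Fintype.card m)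
    (Ψ : Matrix m n 𝕜) :
    ∃ U : Matrix m n 𝕜, ∃ V ∈ unitaryGroup n 𝕜, ∃ σ : n → ℝ, Uᴴ * U = 1 ∧ (∀ j, 0 ≤ σ j) ∧
      Ψ = U * diagonal (fun j => (σ j : 𝕜)) * Vᴴ := by
  have hA := isHermitian_conjTranspose_mul_self Ψ
  set V : Matrix n n 𝕜 := ↑hA.eigenvectorUnitary
  have hW : (Ψ * V)ᴴ * (Ψ * V) = diagonal fun j => (hA.eigenvalues j : 𝕜) := by
    simpa [V, Matrix.mul_assoc, star_eq_conjTranspose, Function.comp_def] using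
      hA.conjStarAlgAut_star_eigenvectorUnitary
  obtain ⟨U, hU, hΨV⟩ :=
    exists_isometry_mul_diagonal_of_conjTranspose_mul_self_eq_diagonal hcard hW
  refine ⟨U, V, hA.eigenvectorUnitary.2, fun j => √(hA.eigenvalues j), hU,
    fun j => Real.sqrt_nonneg _, ?_⟩
  rw [← hΨV, Matrix.mul_assoc, ← star_eq_conjTranspose,
    Unitary.mul_star_self_of_mem hA.eigenvectorUnitary.2, Matrix.mul_one]

theorem re_trace_sub_isometry_le_of_eq_svd [DecidableEq n] {Ψ U : Matrix m n 𝕜}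
    {V : Matrix n n 𝕜} {σ : n → ℝ} (hU : Uᴴ * U = 1) (hV : V ∈ unitaryGroup n 𝕜) (hσ : ∀ j, 0 ≤ σ j)
    (hΨ : Ψ = U * diagonal (fun j => (σ j : 𝕜)) * Vᴴ) :
    RCLike.re ((Ψ - U * Vᴴ)ᴴ * (Ψ - U * Vᴴ)).trace ≤
      RCLike.re ((Ψᴴ * Ψ - 1)ᴴ * (Ψᴴ * Ψ - 1)).trace := by
  have hV₁ : Vᴴ * V = 1 := Unitary.star_mul_self_of_mem hV
  have hV₂ : V * Vᴴ = 1 := Unitary.mul_star_self_of_mem hV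
  have hΨ₁ : Ψ - U * Vᴴ = U * diagonal (fun j => ((σ j - 1 : ℝ) : 𝕜)) * Vᴴ := by
    rw [hΨ, diagonal_ofReal_sub_one, Matrix.mul_sub, Matrix.sub_mul, Matrix.mul_one]
  have hΨ₂ : Ψᴴ * Ψ - 1 = V * diagonal (fun j => ((σ j ^ 2 - 1 : ℝ) : 𝕜)) * Vᴴ := by
    rw [diagonal_ofReal_sub_one, Matrix.mul_sub, Matrix.sub_mul, Matrix.mul_one, hV₂, hΨ]
    simp only [conjTranspose_mul, conjTranspose_conjTranspose, diagonal_conjTranspose,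
      Matrix.mul_assoc]
    rw [← Matrix.mul_assoc Uᴴ, hU, Matrix.one_mul, ← Matrix.mul_assoc (diagonal _),
      diagonal_mul_diagonal]
    simp [sq]
  rw [hΨ₁, hΨ₂, trace_conjTranspose_mul_self_isometry_mul_mul_conjTranspose hU hV₁,
    trace_conjTranspose_mul_self_isometry_mul_mul_conjTranspose hV₁ hV₁,
    re_trace_conjTranspose_mul_self_diagonal, re_trace_conjTranspose_mul_self_diagonal]
  exact Finset.sum_le_sum fun j _ => sq_sub_one_le_sq_sq_sub_one (hσ j)

end Matrix

/-- Orthogonal Procrustes bound: for unit vectors `|ψ₁⟩,…,|ψ_k⟩` in `ℂⁿ` (with `k ≤ n`),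
assembled as the columns of a matrix `Ψ`, there is a matrix `Ψ'` with orthonormal columns
such that `‖Ψ − Ψ'‖₂² ≤ Σ_{i≠j} |⟨ψᵢ|ψⱼ⟩|²`. -/
theorem procrustes_bound {n k : ℕ} (hkn : k ≤ n) (ψ : Fin k → Fin n → ℂ)
    (hψ : ∀ i, star (ψ i) ⬝ᵥ ψ i = 1) :
    ∃ Ψ' : Matrix (Fin n) (Fin k) ℂ, Ψ'ᴴ * Ψ' = 1 ∧
      ((((Matrix.of fun a i => ψ i a) - Ψ')ᴴ * ((Matrix.of fun a i => ψ i a) - Ψ')).trace).re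
        ≤ ∑ i, ∑ j, if i ≠ j then Complex.normSq (star (ψ i) ⬝ᵥ ψ j) else 0 := by
  set Ψ : Matrix (Fin n) (Fin k) ℂ := Matrix.of fun a i => ψ i a
  obtain ⟨U, V, hV, σ, hU, hσ, hΨ⟩ := exists_thin_svd (by simpa using hkn) Ψ
  refine ⟨U * Vᴴ, ?_, ?_⟩
  · rw [conjTranspose_mul, conjTranspose_conjTranspose, Matrix.mul_assoc, ← Matrix.mul_assoc Uᴴ,
      hU, Matrix.one_mul, ← star_eq_conjTranspose, Unitary.mul_star_self_of_mem hV]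
  calc RCLike.re ((Ψ - U * Vᴴ)ᴴ * (Ψ - U * Vᴴ)).trace
      ≤ RCLike.re ((Ψᴴ * Ψ - 1)ᴴ * (Ψᴴ * Ψ - 1)).trace :=
        re_trace_sub_isometry_le_of_eq_svd hU hV hσ hΨ
    _ = ∑ i, ∑ j, ‖(Ψᴴ * Ψ - 1 : Matrix (Fin k) (Fin k) ℂ) i j‖ ^ 2 :=
        re_trace_conjTranspose_mul_self _
    _ = _ := by
        refine Finset.sum_congr rfl fun i _ => Finset.sum_congr rfl fun j _ => ?_
        have hΨΨ : (Ψᴴ * Ψ) i j = star (ψ i) ⬝ᵥ ψ j := by simp [Ψ, mul_apply, dotProduct]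
        rcases eq_or_ne i j with rfl | hij
        · simp [hΨΨ, hψ]
        · simp [hΨΨ, hij, Complex.normSq_eq_norm_sq]
end
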